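/- arXiv:2005.01952 — 9 statements merged into one kernel-verified Lean document; each statement's English description precedes it below -/
import Mathlib

section
/- Let L be a real symmetric positive semidefinite M×M matrix, let G be a real K×M matrix with rank K (0 ≤ K ≤ M), a ∈ ℝ^K, and define the constraint set Ω = {θ ∈ ℝ^M : Gθ + a = 0}. Let U be a real M×(M−K) matrix with GU = 0 and UᵀU = I_{M−K}. Let X be a measurable space, and for each θ ∈ Ω let μ_θ be a probability measure on X; let T : X → ℝ^M be a measurable estimator that is square-integrable with respect to μ_θ for every θ ∈ Ω. Then the following are equivalent: (i) Uᵀ L (E_{μ_θ}[T] − θ) = 0 for all θ ∈ Ω; (ii) for all θ, η ∈ Ω: E_{μ_θ}[(T − η)ᵀ L (T − η)] ≥ E_{μ_θ}[(T − θ)ᵀ L (T − θ)]. -/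
open Matrix MeasureTheory

section Aux

variable {M : ℕ} {X : Type*} [MeasurableSpace X]

private lemma integrable_mul_of_memL2 {μ : Measure X} {f g : X → ℝ}
    (hf : MemLp f 2 μ) (hg : MemLp g 2 μ) :
    Integrable (fun x => f x * g x) μ := by
  have h1 := (hf.add hg).integrable_sq
  have h2 := hf.integrable_sq
  have h3 := hg.integrable_sq
  have key : (fun x => f x * g x)
      = fun x => (((f x + g x) ^ 2 - f x ^ 2) - g x ^ 2) / 2 := by
    funext x; ring
  rw [key]
  exact ((h1.sub h2).sub h3).div_const 2

private lemma quad_expand (L : Matrix (Fin M) (Fin M) ℝ) (hL : Lᵀ = L)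
    (S d : Fin M → ℝ) :
    (S - d) ⬝ᵥ (L *ᵥ (S - d))
      = S ⬝ᵥ (L *ᵥ S) - 2 * (d ⬝ᵥ (L *ᵥ S)) + d ⬝ᵥ (L *ᵥ d) := by
  have hsym : ∀ a b : Fin M → ℝ, a ⬝ᵥ (L *ᵥ b) = b ⬝ᵥ (L *ᵥ a) := by
    intro a b
    rw [Matrix.dotProduct_mulVec, ← Matrix.mulVec_transpose, hL, dotProduct_comm]
  simp only [Matrix.mulVec_sub, sub_dotProduct, dotProduct_sub]
  rw [hsym S d]
  ring

private lemma integrable_quad (μ : Measure X) [IsFiniteMeasure μ]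
    (L : Matrix (Fin M) (Fin M) ℝ) (T : X → Fin M → ℝ)
    (hT : ∀ i, MemLp (fun x => T x i) 2 μ) (c : Fin M → ℝ) :
    Integrable (fun x => (T x - c) ⬝ᵥ (L *ᵥ (T x - c))) μ := by
  have hTc : ∀ i, MemLp (fun x => T x i - c i) 2 μ := fun i =>
    (hT i).sub (memLp_const _)
  have key : (fun x => (T x - c) ⬝ᵥ (L *ᵥ (T x - c)))
      = fun x => ∑ i, ∑ j, L i j * ((T x i - c i) * (T x j - c j)) := by
    funext x
    simp only [dotProduct, Matrix.mulVec, Finset.mul_sum, Pi.sub_apply]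
    exact Finset.sum_congr rfl fun i _ => Finset.sum_congr rfl fun j _ => by ring
  rw [key]
  exact integrable_finset_sum _ fun i _ => integrable_finset_sum _ fun j _ =>
    (integrable_mul_of_memL2 (hTc i) (hTc j)).const_mul _

private lemma integral_dot_linear (μ : Measure X) [IsProbabilityMeasure μ]
    (T : X → Fin M → ℝ) (hT : ∀ i, MemLp (fun x => T x i) 2 μ)
    (v θ : Fin M → ℝ) :
    Integrable (fun x => v ⬝ᵥ (T x - θ)) μ ∧
      ∫ x, v ⬝ᵥ (T x - θ) ∂μ = v ⬝ᵥ ((fun i => ∫ x, T x i ∂μ) - θ) := by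
  have hTi : ∀ i, Integrable (fun x => T x i) μ := fun i =>
    (hT i).integrable one_le_two
  have key : (fun x => v ⬝ᵥ (T x - θ)) = fun x => ∑ i, v i * (T x i - θ i) := by
    funext x; simp [dotProduct]
  have hint : ∀ i, Integrable (fun x => v i * (T x i - θ i)) μ := fun i =>
    ((hTi i).sub (integrable_const _)).const_mul _
  constructor
  · rw [key]; exact integrable_finset_sum _ fun i _ => hint i
  · rw [key, integral_finset_sum _ fun i _ => hint i]
    simp only [dotProduct, Pi.sub_apply]
    refine Finset.sum_congr rfl fun i _ => ?_
    rw [integral_const_mul, integral_sub (hTi i) (integrable_const _)]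
    simp

/-- The key expansion of the expected Dirichlet-energy cost. -/
private lemma cost_expand (μ : Measure X) [IsProbabilityMeasure μ]
    (L : Matrix (Fin M) (Fin M) ℝ) (hL : Lᵀ = L)
    (T : X → Fin M → ℝ) (hT : ∀ i, MemLp (fun x => T x i) 2 μ)
    (θ η : Fin M → ℝ) :
    ∫ x, (T x - η) ⬝ᵥ (L *ᵥ (T x - η)) ∂μ
      = ∫ x, (T x - θ) ⬝ᵥ (L *ᵥ (T x - θ)) ∂μ
        - 2 * ((η - θ) ⬝ᵥ (L *ᵥ ((fun i => ∫ x, T x i ∂μ) - θ)))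
        + (η - θ) ⬝ᵥ (L *ᵥ (η - θ)) := by
  set d : Fin M → ℝ := η - θ with hd
  have hpt : (fun x => (T x - η) ⬝ᵥ (L *ᵥ (T x - η)))
      = fun x => (T x - θ) ⬝ᵥ (L *ᵥ (T x - θ))
          - 2 * ((L *ᵥ d) ⬝ᵥ (T x - θ)) + d ⬝ᵥ (L *ᵥ d) := by
    funext x
    have h1 : T x - η = (T x - θ) - d := by rw [hd]; abel
    rw [h1, quad_expand L hL (T x - θ) d]
    congr 2
    rw [Matrix.dotProduct_mulVec, ← Matrix.mulVec_transpose, hL]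
  have hq := integrable_quad μ L T hT θ
  have hlin := integral_dot_linear μ T hT (L *ᵥ d) θ
  have hsub : Integrable (fun x => (T x - θ) ⬝ᵥ (L *ᵥ (T x - θ))
      - 2 * ((L *ᵥ d) ⬝ᵥ (T x - θ))) μ := hq.sub (hlin.1.const_mul 2)
  rw [hpt, integral_add hsub (integrable_const _),
    integral_sub hq (hlin.1.const_mul 2), integral_const, integral_const_mul, hlin.2]
  have : (L *ᵥ d) ⬝ᵥ ((fun i => ∫ x, T x i ∂μ) - θ)
      = d ⬝ᵥ (L *ᵥ ((fun i => ∫ x, T x i ∂μ) - θ)) := by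
    rw [Matrix.dotProduct_mulVec, ← Matrix.mulVec_transpose, hL, dotProduct_comm]
  rw [this]
  simp

end Aux

/-- Equivalence between graph-unbiasedness and Lehmann unbiasedness with respect
to the Laplacian-based (Dirichlet energy) cost over a linearly constrained set. -/
theorem stmt_3 (M K : ℕ) (hK : K ≤ M)
    (L : Matrix (Fin M) (Fin M) ℝ) (hL : L.PosSemidef)
    (G : Matrix (Fin K) (Fin M) ℝ) (hG : G.rank = K) (a : Fin K → ℝ)
    (U : Matrix (Fin M) (Fin (M - K)) ℝ) (hGU : G * U = 0) (hUU : Uᵀ * U = 1)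
    (X : Type*) [MeasurableSpace X]
    (μ : (Fin M → ℝ) → Measure X)
    (hμ : ∀ θ : Fin M → ℝ, G *ᵥ θ + a = 0 → IsProbabilityMeasure (μ θ))
    (T : X → Fin M → ℝ) (hTmeas : Measurable T)
    (hTint : ∀ θ : Fin M → ℝ, G *ᵥ θ + a = 0 →
      ∀ i : Fin M, MemLp (fun x => T x i) 2 (μ θ)) :
    ((∀ θ : Fin M → ℝ, G *ᵥ θ + a = 0 →
        Uᵀ *ᵥ (L *ᵥ ((fun i => ∫ x, T x i ∂(μ θ)) - θ)) = 0) ↔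
      (∀ θ η : Fin M → ℝ, G *ᵥ θ + a = 0 → G *ᵥ η + a = 0 →
        ∫ x, (T x - η) ⬝ᵥ (L *ᵥ (T x - η)) ∂(μ θ) ≥
          ∫ x, (T x - θ) ⬝ᵥ (L *ᵥ (T x - θ)) ∂(μ θ))) := by
  have hLsymm : Lᵀ = L := by
    ext i j
    simp only [Matrix.transpose_apply]
    simpa using congrFun (congrFun hL.1 i) j
  have hpsd : ∀ d : Fin M → ℝ, 0 ≤ d ⬝ᵥ (L *ᵥ d) := by
    intro d
    have := hL.dotProduct_mulVec_nonneg d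
    simpa using this
  constructor
  · -- (i) → (ii)
    intro h θ η hθ hη
    haveI := hμ θ hθ
    -- η - θ lies in the range of U
    have hrange : LinearMap.range U.mulVecLin = LinearMap.ker G.mulVecLin := by
      have hle : LinearMap.range U.mulVecLin ≤ LinearMap.ker G.mulVecLin := by
        rintro x ⟨w, rfl⟩
        simp only [LinearMap.mem_ker, Matrix.mulVecLin_apply, Matrix.mulVec_mulVec, hGU,
          Matrix.zero_mulVec]
      have hUinj : Function.Injective U.mulVecLin := by
        rw [← LinearMap.ker_eq_bot, LinearMap.ker_eq_bot']
        intro w hw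
        have : Uᵀ *ᵥ (U *ᵥ w) = 0 := by
          simp only [Matrix.mulVecLin_apply] at hw
          rw [hw, Matrix.mulVec_zero]
        rwa [Matrix.mulVec_mulVec, hUU, Matrix.one_mulVec] at this
      have h1 : Module.finrank ℝ (LinearMap.range U.mulVecLin) = M - K := by
        rw [LinearMap.finrank_range_of_inj hUinj]
        simp [Module.finrank_pi]
      have h2 : Module.finrank ℝ (LinearMap.ker G.mulVecLin) = M - K := by
        have := LinearMap.finrank_range_add_finrank_ker G.mulVecLin
        rw [show Module.finrank ℝ (LinearMap.range G.mulVecLin) = K from hG] at this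
        simp only [Module.finrank_pi, Fintype.card_fin] at this
        omega
      exact Submodule.eq_of_le_of_finrank_eq hle (by rw [h1, h2])
    have hker : η - θ ∈ LinearMap.ker G.mulVecLin := by
      simp only [LinearMap.mem_ker, Matrix.mulVecLin_apply, Matrix.mulVec_sub]
      have h1 : G *ᵥ θ = -a := by
        have := hθ; rwa [add_eq_zero_iff_eq_neg] at this
      have h2 : G *ᵥ η = -a := by
        have := hη; rwa [add_eq_zero_iff_eq_neg] at this
      rw [h1, h2, sub_self]
    rw [← hrange] at hker
    obtain ⟨w, hw⟩ := hker
    simp only [Matrix.mulVecLin_apply] at hw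
    have hexp := cost_expand (μ θ) L hLsymm T (hTint θ hθ) θ η
    have hzero : (η - θ) ⬝ᵥ (L *ᵥ ((fun i => ∫ x, T x i ∂(μ θ)) - θ)) = 0 := by
      rw [← hw, dotProduct_comm, Matrix.dotProduct_mulVec (L *ᵥ _),
        ← Matrix.mulVec_transpose]
      rw [h θ hθ]
      simp
    rw [hexp, hzero]
    have := hpsd (η - θ)
    linarith
  · -- (ii) → (i)
    intro h θ hθ
    haveI := hμ θ hθ
    set m : Fin M → ℝ := fun i => ∫ x, T x i ∂(μ θ) with hm
    set v : Fin (M - K) → ℝ := Uᵀ *ᵥ (L *ᵥ (m - θ)) with hv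
    set c : ℝ := v ⬝ᵥ v with hc
    have hc0 : 0 ≤ c := by
      rw [hc, dotProduct]
      exact Finset.sum_nonneg fun i _ => mul_self_nonneg _
    set q : ℝ := (U *ᵥ v) ⬝ᵥ (L *ᵥ (U *ᵥ v)) with hq
    have hq0 : 0 ≤ q := hpsd _
    -- for every t > 0, 2 * c ≤ t * q
    have hkey : ∀ t : ℝ, 0 < t → 2 * c ≤ t * q := by
      intro t ht
      set η : Fin M → ℝ := θ + t • (U *ᵥ v) with hη
      have hηΩ : G *ᵥ η + a = 0 := by
        rw [hη, Matrix.mulVec_add, Matrix.mulVec_smul, Matrix.mulVec_mulVec, hGU,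
          Matrix.zero_mulVec, smul_zero, add_zero, hθ]
      have hge := h θ η hθ hηΩ
      have hexp := cost_expand (μ θ) L hLsymm T (hTint θ hθ) θ η
      have hd : η - θ = t • (U *ᵥ v) := by rw [hη]; abel
      have hdot : (η - θ) ⬝ᵥ (L *ᵥ ((fun i => ∫ x, T x i ∂(μ θ)) - θ)) = t * c := by
        rw [hd, smul_dotProduct]
        have : (U *ᵥ v) ⬝ᵥ (L *ᵥ (m - θ)) = v ⬝ᵥ v := by
          rw [dotProduct_comm, Matrix.dotProduct_mulVec (L *ᵥ (m - θ)),
            ← Matrix.mulVec_transpose, ← hv]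
        rw [hm] at this
        rw [this]
        simp [hc, smul_eq_mul]
      have hquad : (η - θ) ⬝ᵥ (L *ᵥ (η - θ)) = t ^ 2 * q := by
        rw [hd, smul_dotProduct, Matrix.mulVec_smul, dotProduct_smul]
        simp [hq, smul_eq_mul]; ring
      rw [hexp, hdot, hquad] at hge
      have h2 : 0 ≤ -(2 * (t * c)) + t ^ 2 * q := by linarith
      have h3 : t * (2 * c) ≤ t * (t * q) := by nlinarith
      exact le_of_mul_le_mul_left h3 ht
    have hczero : c = 0 := by
      by_contra hne
      have hcpos : 0 < c := lt_of_le_of_ne hc0 (Ne.symm hne)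
      have ht : (0 : ℝ) < c / (q + 1) := by positivity
      have := hkey (c / (q + 1)) ht
      have hq1 : q / (q + 1) < 1 := by
        rw [div_lt_one (by linarith)]; linarith
      have : 2 * c ≤ c * (q / (q + 1)) := by
        calc 2 * c ≤ c / (q + 1) * q := this
        _ = c * (q / (q + 1)) := by ring
      nlinarith
    rw [hc] at hczero
    exact dotProduct_self_eq_zero.mp hczero
end

section
/- Let M ≥ 1 and 0 ≤ K ≤ M. Let V be a real M×M orthogonal matrix, Λ an M×M diagonal matrix with nonnegative diagonal entries, and W := Λ^{1/2} Vᵀ. Let U be a real M×(M−K) matrix. Let (X, μ) be a probability space and let ε, s : X → ℝ^M be measurable and square-integrable (so that the matrix-valued second moments E_μ[εεᵀ], E_μ[εsᵀ], E_μ[ssᵀ] exist). Define J := E_μ[s sᵀ] and suppose that W (E_μ[ε sᵀ]) U = W U. Let P be a real (M−K)×(M−K) matrix with Pᵀ = P and P (Uᵀ J U) P = P. Then the matrix W E_μ[ε εᵀ] Wᵀ − W U P Uᵀ Wᵀ is positive semidefinite. -/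
open Matrix MeasureTheory

lemma crb_integrable_mul {X : Type*} [MeasurableSpace X] {μ : Measure X} {f g : X → ℝ}
    (hf : MemLp f 2 μ) (hg : MemLp g 2 μ) : Integrable (fun x => f x * g x) μ := by
  have h := hf.smul (r := 1) (hpqr := ⟨by rw [inv_one, ENNReal.inv_two_add_inv_two]⟩) hg
  rw [memLp_one_iff_integrable] at h
  have h' : Integrable (f * g) μ := by simpa [Pi.smul_apply, smul_eq_mul, mul_comm] using h
  exact h'

lemma crb_memLp_dot {X : Type*} [MeasurableSpace X] {μ : Measure X} {M : ℕ}
    {f : X → Fin M → ℝ} (hf : ∀ i, MemLp (fun x => f x i) 2 μ) (a : Fin M → ℝ) :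
    MemLp (fun x => a ⬝ᵥ f x) 2 μ := by
  simp only [dotProduct]
  have h := memLp_finsetSum' (μ := μ) (ε' := ℝ) Finset.univ
    (f := fun (i : Fin M) (x : X) => a i * f x i) (fun i _ => (hf i).const_mul (a i))
  have he : (fun x => ∑ i, a i * f x i) = ∑ i : Fin M, fun x => a i * f x i := by
    ext x; simp
  rw [he]; exact h

lemma crb_key {X : Type*} [MeasurableSpace X] {μ : Measure X} {M N : ℕ}
    {f : X → Fin M → ℝ} {g : X → Fin N → ℝ}
    (hf : ∀ i, MemLp (fun x => f x i) 2 μ) (hg : ∀ i, MemLp (fun x => g x i) 2 μ)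
    (a : Fin M → ℝ) (b : Fin N → ℝ) :
    a ⬝ᵥ ((Matrix.of fun i j => ∫ x, f x i * g x j ∂μ) *ᵥ b)
      = ∫ x, (a ⬝ᵥ f x) * (b ⬝ᵥ g x) ∂μ := by
  have hint : ∀ i j, Integrable (fun x => a i * f x i * (b j * g x j)) μ := by
    intro i j
    have := crb_integrable_mul (hf i) (hg j)
    have h2 := (this.const_mul (a i)).const_mul (b j)
    convert h2 using 2 with x
    ring
  calc a ⬝ᵥ ((Matrix.of fun i j => ∫ x, f x i * g x j ∂μ) *ᵥ b)
      = ∑ i, ∑ j, ∫ x, a i * f x i * (b j * g x j) ∂μ := by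
        simp only [dotProduct, mulVec, Matrix.of_apply, Finset.mul_sum]
        refine Finset.sum_congr rfl fun i _ => Finset.sum_congr rfl fun j _ => ?_
        rw [← integral_mul_const, ← integral_const_mul]
        congr 1; ext x; ring
    _ = ∫ x, ∑ i, ∑ j, a i * f x i * (b j * g x j) ∂μ := by
        rw [integral_finset_sum]
        · exact Finset.sum_congr rfl fun i _ =>
            (integral_finset_sum _ (fun j _ => hint i j)).symm
        · exact fun i _ => integrable_finset_sum _ (fun j _ => hint i j)
    _ = ∫ x, (a ⬝ᵥ f x) * (b ⬝ᵥ g x) ∂μ := by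
        congr 1; ext x
        simp only [dotProduct, Finset.sum_mul, Finset.mul_sum]
        rw [Finset.sum_comm]

lemma crb_quad {l m n : Type*} [Fintype l] [Fintype m] [Fintype n]
    (A : Matrix n l ℝ) (E : Matrix l m ℝ) (B : Matrix m n ℝ) (v : n → ℝ) :
    v ⬝ᵥ ((A * E * B) *ᵥ v) = (Aᵀ *ᵥ v) ⬝ᵥ (E *ᵥ (B *ᵥ v)) := by
  rw [Matrix.mul_assoc, ← Matrix.mulVec_mulVec, ← Matrix.mulVec_mulVec,
    Matrix.dotProduct_mulVec, ← Matrix.mulVec_transpose]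

/-- The graph Cramér–Rao bound (Theorem 1) in abstract form:
W E[εεᵀ] Wᵀ − W U P Uᵀ Wᵀ is positive semidefinite. -/
theorem stmt_4 (M K : ℕ) (hM : 1 ≤ M) (hK : K ≤ M)
    (V : Matrix (Fin M) (Fin M) ℝ) (hV : Vᵀ * V = 1)
    (d : Fin M → ℝ) (hd : ∀ i, 0 ≤ d i)
    (U : Matrix (Fin M) (Fin (M - K)) ℝ)
    (X : Type*) [MeasurableSpace X] (μ : Measure X) [IsProbabilityMeasure μ]
    (ε s : X → Fin M → ℝ) (hεmeas : Measurable ε) (hsmeas : Measurable s)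
    (hε2 : ∀ i : Fin M, MemLp (fun x => ε x i) 2 μ)
    (hs2 : ∀ i : Fin M, MemLp (fun x => s x i) 2 μ)
    (W J : Matrix (Fin M) (Fin M) ℝ)
    (hW : W = Matrix.diagonal (fun i => Real.sqrt (d i)) * Vᵀ)
    (hJ : J = Matrix.of fun i j => ∫ x, s x i * s x j ∂μ)
    (hreg : W * (Matrix.of fun i j => ∫ x, ε x i * s x j ∂μ) * U = W * U)
    (P : Matrix (Fin (M - K)) (Fin (M - K)) ℝ)
    (hPsym : Pᵀ = P) (hP : P * (Uᵀ * J * U) * P = P) :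
    (W * (Matrix.of fun i j => ∫ x, ε x i * ε x j ∂μ) * Wᵀ
      - W * U * P * Uᵀ * Wᵀ).PosSemidef := by
  set Eεε : Matrix (Fin M) (Fin M) ℝ := Matrix.of fun i j => ∫ x, ε x i * ε x j ∂μ with hEεε
  set Eεs : Matrix (Fin M) (Fin M) ℝ := Matrix.of fun i j => ∫ x, ε x i * s x j ∂μ with hEεs
  have hEsym : Eεεᵀ = Eεε := by
    ext i j
    simp only [Matrix.transpose_apply, hEεε, Matrix.of_apply]
    simp_rw [mul_comm]
  -- right-assoc versions of the hypotheses
  have hreg' : ∀ Q : Matrix (Fin (M - K)) (Fin M) ℝ,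
      W * (Eεs * (U * Q)) = W * (U * Q) := by
    intro Q
    rw [← Matrix.mul_assoc, ← Matrix.mul_assoc, hreg, Matrix.mul_assoc]
  have hP' : ∀ R : Matrix (Fin (M - K)) (Fin M) ℝ,
      P * (Uᵀ * (J * (U * (P * R)))) = P * R := by
    intro R
    have hPc := hP
    simp only [← Matrix.mul_assoc] at hPc ⊢
    rw [hPc]
  have hBB : W * Eεs * (U * P * Uᵀ * Wᵀ) = W * U * P * Uᵀ * Wᵀ := by
    have := hreg' (P * (Uᵀ * Wᵀ))
    simp only [Matrix.mul_assoc]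
    simpa [Matrix.mul_assoc] using this
  have hB2 : (U * P * Uᵀ * Wᵀ)ᵀ * J * (U * P * Uᵀ * Wᵀ) = W * U * P * Uᵀ * Wᵀ := by
    have := hP' (Uᵀ * Wᵀ)
    simp only [Matrix.transpose_mul, Matrix.transpose_transpose, hPsym, Matrix.mul_assoc]
    rw [this]
  rw [posSemidef_iff_dotProduct_mulVec]
  constructor
  · show _ᴴ = _
    rw [Matrix.conjTranspose_eq_transpose_of_trivial]
    simp only [Matrix.transpose_sub, Matrix.transpose_mul, Matrix.transpose_transpose,
      hEsym, hPsym, Matrix.mul_assoc]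
  · intro v
    have hstar : star v = v := by
      funext i; simp
    rw [hstar, Matrix.sub_mulVec, dotProduct_sub]
    set a : Fin M → ℝ := Wᵀ *ᵥ v with ha
    set c : Fin M → ℝ := (U * P * Uᵀ * Wᵀ) *ᵥ v with hc
    have e1 : v ⬝ᵥ ((W * Eεε * Wᵀ) *ᵥ v) = ∫ x, (a ⬝ᵥ ε x) * (a ⬝ᵥ ε x) ∂μ := by
      rw [crb_quad, hEεε]
      exact crb_key hε2 hε2 a a
    have e2 : v ⬝ᵥ ((W * U * P * Uᵀ * Wᵀ) *ᵥ v) = ∫ x, (a ⬝ᵥ ε x) * (c ⬝ᵥ s x) ∂μ := by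
      rw [← hBB, crb_quad, hEεs]
      exact crb_key hε2 hs2 a c
    have e3 : v ⬝ᵥ ((W * U * P * Uᵀ * Wᵀ) *ᵥ v) = ∫ x, (c ⬝ᵥ s x) * (c ⬝ᵥ s x) ∂μ := by
      rw [← hB2, crb_quad, Matrix.transpose_transpose, hJ]
      exact crb_key hs2 hs2 c c
    have Iuu := crb_integrable_mul (crb_memLp_dot hε2 a) (crb_memLp_dot hε2 a)
    have Iuw := crb_integrable_mul (crb_memLp_dot hε2 a) (crb_memLp_dot hs2 c)
    have Iww := crb_integrable_mul (crb_memLp_dot hs2 c) (crb_memLp_dot hs2 c)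
    have hnn : 0 ≤ ∫ x, (a ⬝ᵥ ε x - c ⬝ᵥ s x) * (a ⬝ᵥ ε x - c ⬝ᵥ s x) ∂μ :=
      integral_nonneg fun x => mul_self_nonneg _
    have hexpand : ∫ x, (a ⬝ᵥ ε x - c ⬝ᵥ s x) * (a ⬝ᵥ ε x - c ⬝ᵥ s x) ∂μ
        = (∫ x, (a ⬝ᵥ ε x) * (a ⬝ᵥ ε x) ∂μ)
          - (2 * ∫ x, (a ⬝ᵥ ε x) * (c ⬝ᵥ s x) ∂μ
              - ∫ x, (c ⬝ᵥ s x) * (c ⬝ᵥ s x) ∂μ) := by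
      have hfe : (fun x => (a ⬝ᵥ ε x - c ⬝ᵥ s x) * (a ⬝ᵥ ε x - c ⬝ᵥ s x))
          = fun x => (a ⬝ᵥ ε x) * (a ⬝ᵥ ε x)
              - (2 * ((a ⬝ᵥ ε x) * (c ⬝ᵥ s x)) - (c ⬝ᵥ s x) * (c ⬝ᵥ s x)) :=
        funext fun x => by ring
      have Isub : Integrable (fun x => 2 * (a ⬝ᵥ ε x * c ⬝ᵥ s x) - c ⬝ᵥ s x * c ⬝ᵥ s x) μ :=
        (Iuw.const_mul 2).sub Iww
      rw [hfe, integral_sub Iuu Isub,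
        integral_sub (Iuw.const_mul 2) Iww, integral_const_mul]
    rw [e1, e2]
    have := hexpand ▸ hnn
    have he23 : ∫ x, (a ⬝ᵥ ε x) * (c ⬝ᵥ s x) ∂μ = ∫ x, (c ⬝ᵥ s x) * (c ⬝ᵥ s x) ∂μ := by
      rw [← e2, ← e3]
    linarith [this, he23]
end

section
/- Let M ≥ 1 and 0 ≤ K ≤ M. Let V be a real M×M orthogonal matrix, Λ an M×M diagonal matrix with nonnegative diagonal entries, W := Λ^{1/2} Vᵀ, and U a real M×(M−K) matrix. Let (X, μ) be a probability space and let ε, s : X → ℝ^M be measurable and square-integrable, with J := E_μ[s sᵀ]. Let P be a real (M−K)×(M−K) matrix with Pᵀ = P and P (Uᵀ J U) P = P. If W ε = W U P Uᵀ s holds μ-almost everywhere, then W E_μ[ε εᵀ] Wᵀ = W U P Uᵀ Wᵀ. -/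
open Matrix MeasureTheory

lemma quad_int {X : Type*} [MeasurableSpace X] (μ : Measure X) {M N : ℕ}
    (B : Matrix (Fin N) (Fin M) ℝ) (f : X → Fin M → ℝ)
    (hf2 : ∀ i : Fin M, MemLp (fun x => f x i) 2 μ) (i j : Fin N) :
    ∫ x, (B *ᵥ f x) i * (B *ᵥ f x) j ∂μ
      = (B * (Matrix.of fun k l => ∫ x, f x k * f x l ∂μ) * Bᵀ) i j := by
  have hint : ∀ k l : Fin M, Integrable (fun x => f x k * f x l) μ := by
    intro k l
    have h : MemLp ((fun x => f x k) • (fun x => f x l)) 1 μ :=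
      by haveI : ENNReal.HolderTriple 2 2 1 := ⟨by simp only [inv_one]; exact ENNReal.inv_two_add_inv_two⟩; exact (hf2 l).smul (hf2 k)
    exact memLp_one_iff_integrable.mp h
  simp only [mulVec, dotProduct, Matrix.mul_apply, transpose_apply, of_apply]
  have h1 : (fun x => (∑ k, B i k * f x k) * ∑ l, B j l * f x l)
      = fun x => ∑ k, ∑ l, B i k * B j l * (f x k * f x l) := by
    funext x
    rw [Finset.sum_mul_sum]
    exact Finset.sum_congr rfl fun k _ => Finset.sum_congr rfl fun l _ => by ring
  rw [h1, integral_finset_sum _ (fun k _ =>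
    integrable_finset_sum _ (fun l _ => (hint k l).const_mul _))]
  have h2 : ∀ k : Fin M, ∫ x, ∑ l, B i k * B j l * (f x k * f x l) ∂μ
      = ∑ l, B i k * B j l * ∫ x, f x k * f x l ∂μ := fun k => by
    rw [integral_finset_sum _ (fun l _ => (hint k l).const_mul _)]
    exact Finset.sum_congr rfl fun l _ => (integral_const_mul _ _)
  simp only [h2]
  rw [Finset.sum_comm]
  refine Finset.sum_congr rfl fun k _ => ?_
  rw [Finset.sum_mul]
  refine Finset.sum_congr rfl fun l _ => ?_
  ring

/-- Sufficiency direction of the achievability (equality) condition of the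
graph Cramér–Rao bound: if Wε = W U P Uᵀ s a.e., then
W E[εεᵀ] Wᵀ = W U P Uᵀ Wᵀ. -/
theorem stmt_5 (M K : ℕ) (hM : 1 ≤ M) (hK : K ≤ M)
    (V : Matrix (Fin M) (Fin M) ℝ) (hV : Vᵀ * V = 1)
    (d : Fin M → ℝ) (hd : ∀ i, 0 ≤ d i)
    (U : Matrix (Fin M) (Fin (M - K)) ℝ)
    (X : Type*) [MeasurableSpace X] (μ : Measure X) [IsProbabilityMeasure μ]
    (ε s : X → Fin M → ℝ) (hεmeas : Measurable ε) (hsmeas : Measurable s)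
    (hε2 : ∀ i : Fin M, MemLp (fun x => ε x i) 2 μ)
    (hs2 : ∀ i : Fin M, MemLp (fun x => s x i) 2 μ)
    (W J : Matrix (Fin M) (Fin M) ℝ)
    (hW : W = Matrix.diagonal (fun i => Real.sqrt (d i)) * Vᵀ)
    (hJ : J = Matrix.of fun i j => ∫ x, s x i * s x j ∂μ)
    (P : Matrix (Fin (M - K)) (Fin (M - K)) ℝ)
    (hPsym : Pᵀ = P) (hP : P * (Uᵀ * J * U) * P = P)
    (heq : ∀ᵐ x ∂μ, W *ᵥ ε x = (W * U * P * Uᵀ) *ᵥ s x) :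
    W * (Matrix.of fun i j => ∫ x, ε x i * ε x j ∂μ) * Wᵀ
      = W * U * P * Uᵀ * Wᵀ := by
  set A : Matrix (Fin M) (Fin M) ℝ := W * U * P * Uᵀ with hA
  ext i j
  have step1 : (W * (Matrix.of fun k l => ∫ x, ε x k * ε x l ∂μ) * Wᵀ) i j
      = (A * J * Aᵀ) i j := by
    rw [← quad_int μ W ε hε2 i j, hJ, ← quad_int μ A s hs2 i j]
    refine integral_congr_ae ?_
    filter_upwards [heq] with x hx
    rw [hx]
  rw [step1, hA]
  have hAt : (W * U * P * Uᵀ)ᵀ = U * P * Uᵀ * Wᵀ := by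
    simp [Matrix.transpose_mul, hPsym, Matrix.mul_assoc]
  rw [hAt]
  have : W * U * P * Uᵀ * J * (U * P * Uᵀ * Wᵀ)
      = W * U * (P * (Uᵀ * J * U) * P) * (Uᵀ * Wᵀ) := by
    simp only [Matrix.mul_assoc]
  rw [this, hP]
  simp only [Matrix.mul_assoc]
end

section
/- Let L be a real symmetric positive semidefinite M×M matrix (M ≥ 1) with L𝟙 = 0 whose kernel is exactly the span of the all-ones vector 𝟙 (i.e., Lx = 0 implies x is a scalar multiple of 𝟙). Then the matrix L − (1/M) 𝟙𝟙ᵀ is invertible, and the matrix L⁺ := (L − (1/M) 𝟙𝟙ᵀ)^{-1} + (1/M) 𝟙𝟙ᵀ is the Moore–Penrose pseudoinverse of L, i.e., L L⁺ L = L, L⁺ L L⁺ = L⁺, (L L⁺)ᵀ = L L⁺, and (L⁺ L)ᵀ = L⁺ L. -/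
open Matrix

/-- Closed-form Moore–Penrose pseudoinverse of a connected-graph Laplacian:
L⁺ = (L − (1/M)𝟙𝟙ᵀ)⁻¹ + (1/M)𝟙𝟙ᵀ. -/
theorem stmt_7 (M : ℕ) (hM : 1 ≤ M)
    (L : Matrix (Fin M) (Fin M) ℝ) (hL : L.PosSemidef)
    (h1 : L *ᵥ (fun _ => 1) = 0)
    (hker : ∀ x : Fin M → ℝ, L *ᵥ x = 0 → ∃ c : ℝ, x = fun _ => c) :
    IsUnit (L - (M : ℝ)⁻¹ • Matrix.of (fun _ _ => (1 : ℝ))) ∧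
    (∀ Lp : Matrix (Fin M) (Fin M) ℝ,
      Lp = (L - (M : ℝ)⁻¹ • Matrix.of (fun _ _ => (1 : ℝ)))⁻¹
            + (M : ℝ)⁻¹ • Matrix.of (fun _ _ => (1 : ℝ)) →
      L * Lp * L = L ∧ Lp * L * Lp = Lp ∧
        (L * Lp)ᵀ = L * Lp ∧ (Lp * L)ᵀ = Lp * L) := by
  have hM0 : (M : ℝ) ≠ 0 := Nat.cast_ne_zero.mpr (by omega)
  set J : Matrix (Fin M) (Fin M) ℝ := Matrix.of (fun _ _ => (1:ℝ)) with hJdef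
  set K : Matrix (Fin M) (Fin M) ℝ := (M : ℝ)⁻¹ • J with hKdef
  set A : Matrix (Fin M) (Fin M) ℝ := L - K with hAdef
  have hLsymm : Lᵀ = L := hL.1
  have hJsymm : Jᵀ = J := by ext i j; rfl
  have hLJ : L * J = 0 := by
    ext i j
    have := congrFun h1 i
    simpa [Matrix.mul_apply, Matrix.mulVec, dotProduct, hJdef] using this
  have hJL : J * L = 0 := by
    have := congrArg Matrix.transpose hLJ
    simpa [Matrix.transpose_mul, hLsymm, hJsymm] using this
  have hJJ : J * J = (M : ℝ) • J := by
    ext i j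
    simp [Matrix.mul_apply, hJdef, Finset.sum_const, Finset.card_univ]
  have hLK : L * K = 0 := by rw [hKdef, Matrix.mul_smul, hLJ, smul_zero]
  have hKL : K * L = 0 := by rw [hKdef, Matrix.smul_mul, hJL, smul_zero]
  have hKK : K * K = K := by
    rw [hKdef, Matrix.smul_mul, Matrix.mul_smul, hJJ, smul_smul, smul_smul]
    congr 1
    field_simp
  have hKsymm : Kᵀ = K := by rw [hKdef, Matrix.transpose_smul, hJsymm]
  have hAK : A * K = -K := by
    rw [hAdef, Matrix.sub_mul, hLK, hKK, zero_sub]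
  have hKA : K * A = -K := by
    rw [hAdef, Matrix.mul_sub, hKL, hKK, zero_sub]
  -- Invertibility of A
  have hdet : A.det ≠ 0 := by
    intro hdet
    obtain ⟨v, hv, hAv⟩ := Matrix.exists_mulVec_eq_zero_iff.mpr hdet
    have hLv : L *ᵥ v = K *ᵥ v := by
      have := hAv
      rw [hAdef, Matrix.sub_mulVec, sub_eq_zero] at this
      exact this
    set o : Fin M → ℝ := fun _ => (1:ℝ) with hodef
    have hoL : o ᵥ* L = 0 := by
      rw [← hLsymm, Matrix.vecMul_transpose, h1]
    have hdotL : o ⬝ᵥ (L *ᵥ v) = 0 := by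
      rw [Matrix.dotProduct_mulVec, hoL, zero_dotProduct]
    have hKv : ∀ i, (K *ᵥ v) i = (M:ℝ)⁻¹ * ∑ k, v k := by
      intro i
      simp [hKdef, Matrix.mulVec, dotProduct, hJdef, hodef, Finset.mul_sum]
    have hdotK : o ⬝ᵥ (K *ᵥ v) = ∑ k, v k := by
      simp only [dotProduct, hodef, one_mul]
      rw [Finset.sum_congr rfl (fun i _ => hKv i)]
      rw [Finset.sum_const, Finset.card_univ, Fintype.card_fin, nsmul_eq_mul]
      field_simp
    have hsum : (∑ k, v k) = 0 := by
      rw [← hdotK, ← hLv, hdotL]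
    have hKv0 : K *ᵥ v = 0 := by
      funext i
      rw [hKv i, hsum, mul_zero]
      rfl
    have hLv0 : L *ᵥ v = 0 := by rw [hLv, hKv0]
    obtain ⟨c, hc⟩ := hker v hLv0
    have : (M : ℝ) * c = 0 := by
      rw [← hsum, hc]
      simp [Finset.sum_const, Finset.card_univ]
    have hc0 : c = 0 := by
      rcases mul_eq_zero.mp this with h | h
      · exact absurd h hM0
      · exact h
    apply hv
    rw [hc, hc0]
    rfl
  have hUnit : IsUnit A := by
    rw [Matrix.isUnit_iff_isUnit_det, isUnit_iff_ne_zero]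
    exact hdet
  have hdetU : IsUnit A.det := isUnit_iff_ne_zero.mpr hdet
  have hAiA : A⁻¹ * A = 1 := Matrix.nonsing_inv_mul A hdetU
  have hAAi : A * A⁻¹ = 1 := Matrix.mul_nonsing_inv A hdetU
  have hAiK : A⁻¹ * K = -K := by
    have : A⁻¹ * (A * K) = K := by rw [← Matrix.mul_assoc, hAiA, Matrix.one_mul]
    rw [hAK, Matrix.mul_neg] at this
    linear_combination (norm := noncomm_ring) -this
  have hKAi : K * A⁻¹ = -K := by
    have : (K * A) * A⁻¹ = K := by rw [Matrix.mul_assoc, hAAi, Matrix.mul_one]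
    rw [hKA, Matrix.neg_mul] at this
    linear_combination (norm := noncomm_ring) -this
  have hLAi : L * A⁻¹ = 1 - K := by
    have hLA : L = A + K := by rw [hAdef]; abel
    rw [hLA, Matrix.add_mul, hAAi, hKAi]
    abel
  have hAiL : A⁻¹ * L = 1 - K := by
    have hLA : L = A + K := by rw [hAdef]; abel
    rw [hLA, Matrix.mul_add, hAiA, hAiK]
    abel
  refine ⟨hUnit, ?_⟩
  intro Lp hLp
  have hLpdef : Lp = A⁻¹ + K := by rw [hLp, hAdef, hKdef]
  have hLLp : L * Lp = 1 - K := by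
    rw [hLpdef, Matrix.mul_add, hLAi, hLK, add_zero]
  have hLpL : Lp * L = 1 - K := by
    rw [hLpdef, Matrix.add_mul, hAiL, hKL, add_zero]
  refine ⟨?_, ?_, ?_, ?_⟩
  · rw [hLLp, Matrix.sub_mul, Matrix.one_mul, hKL, sub_zero]
  · rw [Matrix.mul_assoc, hLLp, Matrix.mul_sub, Matrix.mul_one, hLpdef,
      Matrix.add_mul, hAiK, hKK]
    abel
  · rw [hLLp, Matrix.transpose_sub, Matrix.transpose_one, hKsymm]
  · rw [hLpL, Matrix.transpose_sub, Matrix.transpose_one, hKsymm]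
end

section
/- Let K and L̄ be real symmetric M×M matrices (M ≥ 1) such that L̄ 𝟙 = 0, K is positive semidefinite, K 𝟙 = 0, and the kernel of K is exactly the span of 𝟙. Let P be the Moore–Penrose pseudoinverse of K. Then L̄ P L̄ = L̄ (K − (1/M) 𝟙𝟙ᵀ)^{-1} L̄ (in particular, K − (1/M) 𝟙𝟙ᵀ is invertible). -/
open Matrix

/-- Key auxiliary fact: if K is symmetric with K𝟙 = 0 and kernel exactly the constants,
and Q satisfies K*Q*K = K with K*Q symmetric, then K*Q = 1 − (1/M)𝟙𝟙ᵀ. -/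
lemma stmt_9_aux (M : ℕ) (hM : 1 ≤ M)
    (K Q : Matrix (Fin M) (Fin M) ℝ)
    (hKsym : K.IsSymm)
    (hK1 : K *ᵥ (fun _ => 1) = 0)
    (hKker : ∀ x : Fin M → ℝ, K *ᵥ x = 0 → ∃ c : ℝ, x = fun _ => c)
    (hQ1 : K * Q * K = K) (hQ3 : (K * Q)ᵀ = K * Q) :
    K * Q = 1 - (M : ℝ)⁻¹ • Matrix.of (fun _ _ => (1 : ℝ)) := by
  have hMne : (M : ℝ) ≠ 0 := by positivity
  set J : Matrix (Fin M) (Fin M) ℝ := (M : ℝ)⁻¹ • Matrix.of (fun _ _ => (1 : ℝ)) with hJdef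
  have hJsym : Jᵀ = J := by
    ext i j; simp [hJdef]
  have hJK : J * K = 0 := by
    ext i j
    have h1 : ∀ i, (K *ᵥ (fun _ => 1)) i = 0 := fun i => by rw [hK1]; rfl
    have h2 : ∑ k, K j k = 0 := by simpa [mulVec, dotProduct] using h1 j
    have h3 : ∑ k, K k j = 0 := by
      calc ∑ k, K k j = ∑ k, K j k := by
            refine Finset.sum_congr rfl fun k _ => ?_
            exact congrFun (congrFun hKsym.symm k) j
        _ = 0 := h2
    simp only [Matrix.mul_apply, hJdef, Matrix.smul_apply, Matrix.of_apply,
      Matrix.zero_apply, smul_eq_mul, one_mul]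
    rw [← Finset.mul_sum, h3, mul_zero]
  -- K*Q kills 𝟙
  have hKQ1 : (K * Q) *ᵥ (fun _ => 1) = 0 := by
    have heq : K * Q = Qᵀ * Kᵀ := by rw [← Matrix.transpose_mul, hQ3]
    rw [heq, ← Matrix.mulVec_mulVec, hKsym, hK1, Matrix.mulVec_zero]
  set R : Matrix (Fin M) (Fin M) ℝ := K * Q - (1 - J) with hRdef
  have hRsym : Rᵀ = R := by
    rw [hRdef, Matrix.transpose_sub, hQ3, Matrix.transpose_sub, Matrix.transpose_one, hJsym]
  have hRK : R * K = 0 := by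
    rw [hRdef, Matrix.sub_mul, Matrix.sub_mul, hQ1, Matrix.one_mul, hJK, sub_zero, sub_self]
  have hKR : K * R = 0 := by
    have : (R * K)ᵀ = K * R := by rw [Matrix.transpose_mul, hRsym, hKsym]
    rw [← this, hRK, Matrix.transpose_zero]
  -- columns of R are constant
  have hcol : ∀ j : Fin M, ∃ c : ℝ, (fun i => R i j) = fun _ => c := by
    intro j
    refine hKker _ ?_
    funext i
    have : (K * R) i j = 0 := by rw [hKR]; rfl
    simpa [Matrix.mul_apply, mulVec, dotProduct] using this
  choose c hc using hcol
  have hRc : ∀ i j, R i j = c j := by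
    intro i j; exact congrFun (hc j) i
  have hcconst : ∀ i j, c i = c j := by
    intro i j
    have h1 : R i j = c j := hRc i j
    have h2 : R j i = c i := hRc j i
    have h3 : R j i = R i j := congrFun (congrFun hRsym i) j
    exact h2.symm.trans (h3.trans h1)
  -- R𝟙 = 0
  have hR1 : R *ᵥ (fun _ => 1) = 0 := by
    have hJ1 : J *ᵥ (fun _ => 1) = fun _ => 1 := by
      funext k
      simp [hJdef, mulVec, dotProduct, Finset.sum_const, Finset.card_fin,
        Matrix.smul_apply, smul_eq_mul, hMne]
    rw [hRdef, Matrix.sub_mulVec, hKQ1, Matrix.sub_mulVec, Matrix.one_mulVec, hJ1]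
    funext i
    simp
  have hRzero : R = 0 := by
    ext i j
    have hsum : ∑ k, R i k = 0 := by
      have := congrFun hR1 i
      simpa [mulVec, dotProduct] using this
    have : ∑ k, R i k = (M : ℝ) * c j := by
      calc ∑ k, R i k = ∑ _k : Fin M, c j := by
            refine Finset.sum_congr rfl fun k _ => ?_
            rw [hRc i k]; exact hcconst k j
        _ = (M : ℝ) * c j := by simp [Finset.sum_const, Finset.card_fin, mul_comm]
    rw [this] at hsum
    have hcj : c j = 0 := by
      rcases mul_eq_zero.mp hsum with h | h
      · exact absurd h hMne
      · exact h
    simp [hRc i j, hcj]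
  have : K * Q - (1 - J) = 0 := hRzero
  linear_combination (norm := abel) this

/-- With K the unweighted Laplacian of a connected graph (kernel = span 𝟙) and
L̄ symmetric with L̄𝟙 = 0: L̄ K† L̄ = L̄ (K − (1/M)𝟙𝟙ᵀ)⁻¹ L̄. -/
theorem stmt_9 (M : ℕ) (hM : 1 ≤ M)
    (K Lb : Matrix (Fin M) (Fin M) ℝ)
    (hKsym : K.IsSymm) (hLbsym : Lb.IsSymm)
    (hLb1 : Lb *ᵥ (fun _ => 1) = 0)
    (hKpsd : K.PosSemidef)
    (hK1 : K *ᵥ (fun _ => 1) = 0)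
    (hKker : ∀ x : Fin M → ℝ, K *ᵥ x = 0 → ∃ c : ℝ, x = fun _ => c)
    (P : Matrix (Fin M) (Fin M) ℝ)
    (hP1 : K * P * K = K) (hP2 : P * K * P = P)
    (hP3 : (K * P)ᵀ = K * P) (hP4 : (P * K)ᵀ = P * K) :
    IsUnit (K - (M : ℝ)⁻¹ • Matrix.of (fun _ _ => (1 : ℝ))) ∧
    Lb * P * Lb
      = Lb * (K - (M : ℝ)⁻¹ • Matrix.of (fun _ _ => (1 : ℝ)))⁻¹ * Lb := by
  have hMne : (M : ℝ) ≠ 0 := by positivity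
  set J : Matrix (Fin M) (Fin M) ℝ := (M : ℝ)⁻¹ • Matrix.of (fun _ _ => (1 : ℝ)) with hJdef
  have hJsym : Jᵀ = J := by ext i j; simp [hJdef]
  -- K * P = 1 - J
  have hKP : K * P = 1 - J :=
    stmt_9_aux M hM K P hKsym hK1 hKker hP1 hP3
  -- K * Pᵀ = P * K
  have hKPt : K * Pᵀ = P * K := by
    calc K * Pᵀ = Kᵀ * Pᵀ := by rw [hKsym]
      _ = (P * K)ᵀ := (Matrix.transpose_mul P K).symm
      _ = P * K := hP4
  -- K * Pᵀ * K = K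
  have hPt1 : K * Pᵀ * K = K := by
    have h : (K * Pᵀ * K)ᵀ = K := by
      rw [Matrix.transpose_mul, Matrix.transpose_mul, Matrix.transpose_transpose, hKsym,
        ← Matrix.mul_assoc, hP1]
    calc K * Pᵀ * K = ((K * Pᵀ * K)ᵀ)ᵀ := (Matrix.transpose_transpose _).symm
      _ = Kᵀ := by rw [h]
      _ = K := hKsym
  have hPt3 : (K * Pᵀ)ᵀ = K * Pᵀ := by rw [hKPt]; exact hP4
  have hKPt' : K * Pᵀ = 1 - J :=
    stmt_9_aux M hM K Pᵀ hKsym hK1 hKker hPt1 hPt3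
  -- P * K = 1 - J
  have hPK : P * K = 1 - J := by rw [← hKPt, hKPt']
  -- J * P = 0 and P * J = 0
  have hJP : J * P = 0 := by
    have h : P = P - J * P := by
      calc P = P * K * P := hP2.symm
        _ = (1 - J) * P := by rw [hPK]
        _ = P - J * P := by rw [Matrix.sub_mul, Matrix.one_mul]
    have := sub_eq_self.mp h.symm
    exact this
  have hPJ : P * J = 0 := by
    have h : P = P - P * J := by
      calc P = P * (K * P) := by rw [← Matrix.mul_assoc]; exact hP2.symm
        _ = P * (1 - J) := by rw [hKP]
        _ = P - P * J := by rw [Matrix.mul_sub, Matrix.mul_one]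
    exact sub_eq_self.mp h.symm
  -- K * J = 0 and J * K = 0
  have hKJ : K * J = 0 := by
    ext i j
    have h1 : ∑ k, K i k = 0 := by
      have := congrFun hK1 i
      simpa [mulVec, dotProduct] using this
    simp only [Matrix.mul_apply, hJdef, Matrix.smul_apply, Matrix.of_apply,
      Matrix.zero_apply, smul_eq_mul, mul_one]
    rw [← Finset.sum_mul, h1, zero_mul]
  have hJK : J * K = 0 := by
    have : (K * J)ᵀ = J * K := by rw [Matrix.transpose_mul, hJsym, hKsym]
    rw [← this, hKJ, Matrix.transpose_zero]
  -- J * J = J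
  have hJJ : J * J = J := by
    ext i j
    simp only [Matrix.mul_apply, hJdef, Matrix.smul_apply, Matrix.of_apply, smul_eq_mul, mul_one]
    rw [Finset.sum_const, Finset.card_fin, nsmul_eq_mul]
    field_simp
  -- inverses
  have hmul1 : (K - J) * (P - J) = 1 := by
    rw [Matrix.sub_mul, Matrix.mul_sub, Matrix.mul_sub, hKP, hKJ, hJP, hJJ]
    abel
  have hmul2 : (P - J) * (K - J) = 1 := by
    rw [Matrix.sub_mul, Matrix.mul_sub, Matrix.mul_sub, hPK, hPJ, hJK, hJJ]
    abel
  have hunit : IsUnit (K - J) := ⟨⟨K - J, P - J, hmul1, hmul2⟩, rfl⟩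
  have hinv : (K - J)⁻¹ = P - J := Matrix.inv_eq_right_inv hmul1
  refine ⟨hunit, ?_⟩
  rw [hinv]
  -- Lb * J = 0
  have hLbJ : Lb * J = 0 := by
    ext i j
    have h1 : ∑ k, Lb i k = 0 := by
      have := congrFun hLb1 i
      simpa [mulVec, dotProduct] using this
    simp only [Matrix.mul_apply, hJdef, Matrix.smul_apply, Matrix.of_apply,
      Matrix.zero_apply, smul_eq_mul, mul_one]
    rw [← Finset.sum_mul, h1, zero_mul]
  rw [Matrix.mul_sub, hLbJ, sub_zero]
end

section
/- Let L̄ and K be real symmetric positive semidefinite M×M matrices (M ≥ 1), each with kernel exactly the span of the all-ones vector 𝟙 (L̄𝟙 = 0, K𝟙 = 0). Let σ > 0 and define J := (1/σ²) · L̄ (K − (1/M) 𝟙𝟙ᵀ)^{-1} L̄. Let L̄⁺ denote the Moore–Penrose pseudoinverse of L̄. Then σ² · L̄⁺ K L̄⁺ is the Moore–Penrose pseudoinverse of J; that is, writing P := σ² L̄⁺ K L̄⁺, one has J P J = J, P J P = P, (J P)ᵀ = J P, and (P J)ᵀ = P J. -/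
open Matrix

/-- Pseudoinverse of the Fisher information matrix in the linear Gaussian
relative-measurement model: J† = σ² L̄† K L̄† for
J = (1/σ²) L̄ (K − (1/M)𝟙𝟙ᵀ)⁻¹ L̄. -/
theorem stmt_10 (M : ℕ) (hM : 1 ≤ M)
    (Lb K : Matrix (Fin M) (Fin M) ℝ)
    (hLbpsd : Lb.PosSemidef) (hKpsd : K.PosSemidef)
    (hLb1 : Lb *ᵥ (fun _ => 1) = 0) (hK1 : K *ᵥ (fun _ => 1) = 0)
    (hLbker : ∀ x : Fin M → ℝ, Lb *ᵥ x = 0 → ∃ c : ℝ, x = fun _ => c)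
    (hKker : ∀ x : Fin M → ℝ, K *ᵥ x = 0 → ∃ c : ℝ, x = fun _ => c)
    (σ : ℝ) (hσ : 0 < σ)
    (Lp : Matrix (Fin M) (Fin M) ℝ)
    (hLp1 : Lb * Lp * Lb = Lb) (hLp2 : Lp * Lb * Lp = Lp)
    (hLp3 : (Lb * Lp)ᵀ = Lb * Lp) (hLp4 : (Lp * Lb)ᵀ = Lp * Lb)
    (J P : Matrix (Fin M) (Fin M) ℝ)
    (hJ : J = (σ ^ 2)⁻¹ •
      (Lb * (K - (M : ℝ)⁻¹ • Matrix.of (fun _ _ => (1 : ℝ)))⁻¹ * Lb))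
    (hP : P = (σ ^ 2) • (Lp * K * Lp)) :
    J * P * J = J ∧ P * J * P = P ∧ (J * P)ᵀ = J * P ∧ (P * J)ᵀ = P * J := by
  have hMne : (M:ℝ) ≠ 0 := Nat.cast_ne_zero.2 (by omega)
  set E : Matrix (Fin M) (Fin M) ℝ := Matrix.of (fun _ _ => (1:ℝ)) with hEdef
  have hKsym : Kᵀ = K := by exact (by simpa using hKpsd.isHermitian : K.IsSymm)
  have hLbsym : Lbᵀ = Lb := by exact (by simpa using hLbpsd.isHermitian : Lb.IsSymm)
  have hEt : Eᵀ = E := by ext i j; simp [hEdef]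
  have hK1' : ∀ i, ∑ k, K i k = 0 := by
    intro i; have := congrFun hK1 i; simpa [mulVec, dotProduct] using this
  have hLb1' : ∀ i, ∑ k, Lb i k = 0 := by
    intro i; have := congrFun hLb1 i; simpa [mulVec, dotProduct] using this
  have hEE : E * E = (M:ℝ) • E := by
    ext i j; simp [hEdef, Matrix.mul_apply, Finset.sum_const]
  have hKE : K * E = 0 := by
    ext i j; simpa [Matrix.mul_apply, hEdef] using hK1' i
  have hEK : E * K = 0 := by
    ext i j
    have hsym : ∀ a b, K a b = K b a := fun a b => by
      have := congrFun (congrFun hKsym b) a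
      simpa [Matrix.transpose_apply] using this
    have : ∑ k, K k j = 0 := by
      simp_rw [fun k => hsym k j]; exact hK1' j
    simpa [Matrix.mul_apply, hEdef] using this
  have hLbE : Lb * E = 0 := by
    ext i j; simpa [Matrix.mul_apply, hEdef] using hLb1' i
  have hELb : E * Lb = 0 := by
    ext i j
    have hsym : ∀ a b, Lb a b = Lb b a := fun a b => by
      have := congrFun (congrFun hLbsym b) a
      simpa [Matrix.transpose_apply] using this
    have : ∑ k, Lb k j = 0 := by
      simp_rw [fun k => hsym k j]; exact hLb1' j
    simpa [Matrix.mul_apply, hEdef] using this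
  set G : Matrix (Fin M) (Fin M) ℝ := K + (M:ℝ)⁻¹ • E with hGdef
  have hGE : G * E = E := by
    rw [hGdef, add_mul, hKE, smul_mul_assoc, hEE, smul_smul,
      inv_mul_cancel₀ hMne, one_smul, zero_add]
  have hEG : E * G = E := by
    rw [hGdef, mul_add, hEK, mul_smul_comm, hEE, smul_smul,
      inv_mul_cancel₀ hMne, one_smul, zero_add]
  have hGpd : G.PosDef := by
    refine Matrix.PosDef.of_dotProduct_mulVec_pos ?_ ?_
    · show Gᴴ = G
      rw [hGdef]
      ext i j
      simp [Matrix.conjTranspose_apply, hEdef]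
      have := congrFun (congrFun hKsym i) j
      simpa [Matrix.transpose_apply] using this
    · intro x hx
      have hsx : star x = x := star_trivial x
      rw [hsx, hGdef, add_mulVec, dotProduct_add, smul_mulVec,
        dotProduct_smul]
      have h1 : (0:ℝ) ≤ x ⬝ᵥ K *ᵥ x := by
        have := hKpsd.dotProduct_mulVec_nonneg x; rwa [hsx] at this
      have hEx : x ⬝ᵥ E *ᵥ x = (∑ k, x k) ^ 2 := by
        simp [dotProduct, mulVec, hEdef, Finset.sum_mul, sq, Finset.mul_sum,
          mul_comm]
      by_cases hK0 : x ⬝ᵥ K *ᵥ x = 0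
      · have hKx : K *ᵥ x = 0 := by
          rw [← hKpsd.dotProduct_mulVec_zero_iff x, hsx]; exact hK0
        obtain ⟨c, hc⟩ := hKker x hKx
        have hc0 : c ≠ 0 := by
          rintro rfl; exact hx (by simpa [Pi.zero_def] using hc)
        have : (∑ k, x k) = (M:ℝ) * c := by
          subst hc; simp [Finset.sum_const, mul_comm]
        have hpos : 0 < (M:ℝ)⁻¹ • (x ⬝ᵥ E *ᵥ x) := by
          rw [hEx, this]
          have : ((M:ℝ) * c) ^ 2 > 0 := by positivity
          positivity
        rw [hK0, zero_add]; exact hpos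
      · have h2 : (0:ℝ) ≤ (M:ℝ)⁻¹ • (x ⬝ᵥ E *ᵥ x) := by
          rw [hEx]; positivity
        have := lt_of_le_of_ne h1 (Ne.symm hK0)
        linarith [h2]
  have hGdet : IsUnit G.det := hGpd.det_pos.ne'.isUnit
  have hGGi : G * G⁻¹ = 1 := Matrix.mul_nonsing_inv G hGdet
  have hGiG : G⁻¹ * G = 1 := Matrix.nonsing_inv_mul G hGdet
  have hGiE : G⁻¹ * E = E := by
    calc G⁻¹ * E = G⁻¹ * (G * E) := by rw [hGE]
    _ = G⁻¹ * G * E := by rw [Matrix.mul_assoc]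
    _ = E := by rw [hGiG, Matrix.one_mul]
  have hEGi : E * G⁻¹ = E := by
    calc E * G⁻¹ = E * G * G⁻¹ := by rw [hEG]
    _ = E := by rw [Matrix.mul_assoc, hGGi, Matrix.mul_one]
  have hKsub : K = G - (M:ℝ)⁻¹ • E := by rw [hGdef]; abel
  have hKGi : K * G⁻¹ = 1 - (M:ℝ)⁻¹ • E := by
    rw [hKsub, sub_mul, hGGi, smul_mul_assoc, hEGi]
  have hGiK : G⁻¹ * K = 1 - (M:ℝ)⁻¹ • E := by
    rw [hKsub, mul_sub, hGiG, mul_smul_comm, hGiE]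
  have hQinv : (K - (M:ℝ)⁻¹ • E)⁻¹ = G⁻¹ - (2 * (M:ℝ)⁻¹) • E := by
    apply Matrix.inv_eq_right_inv
    simp only [sub_mul, mul_sub, smul_mul_assoc, mul_smul_comm, hKGi, hKE,
      hEGi, hEE, smul_smul, smul_zero, sub_zero]
    rw [inv_mul_cancel₀ hMne, one_smul]
    module
  -- the key uniqueness lemma: a matrix killed by Lb and E on the left is zero
  have key : ∀ D : Matrix (Fin M) (Fin M) ℝ, Lb * D = 0 → E * D = 0 → D = 0 := by
    intro D h1 h2
    ext i j
    obtain ⟨c, hc⟩ := hLbker (fun k => D k j) (by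
      funext a
      have := congrFun (congrFun h1 a) j
      simpa [Matrix.mul_apply, mulVec, dotProduct] using this)
    have hsum : ∑ k, D k j = 0 := by
      have := congrFun (congrFun h2 i) j
      simpa [Matrix.mul_apply, hEdef] using this
    have hMc : (M:ℝ) * c = 0 := by
      have : ∑ k : Fin M, c = (M:ℝ) * c := by simp [Finset.sum_const, mul_comm]
      rw [← this, ← hsum]
      exact Finset.sum_congr rfl fun k _ => (congrFun hc k).symm ▸ rfl
    have hc0 : c = 0 := by
      rcases mul_eq_zero.mp hMc with h | h
      · exact absurd h hMne
      · exact h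
    have := congrFun hc i
    simp only [this, hc0, Matrix.zero_apply]
  set Pi : Matrix (Fin M) (Fin M) ℝ := 1 - (M:ℝ)⁻¹ • E with hPidef
  have hEPi : E * Pi = 0 := by
    rw [hPidef, mul_sub, Matrix.mul_one, mul_smul_comm, hEE, smul_smul,
      inv_mul_cancel₀ hMne, one_smul, sub_self]
  have hPiE : Pi * E = 0 := by
    rw [hPidef, sub_mul, Matrix.one_mul, smul_mul_assoc, hEE, smul_smul,
      inv_mul_cancel₀ hMne, one_smul, sub_self]
  have hPiLb : Pi * Lb = Lb := by
    rw [hPidef, sub_mul, Matrix.one_mul, smul_mul_assoc, hELb, smul_zero, sub_zero]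
  have hLbPi : Lb * Pi = Lb := by
    rw [hPidef, mul_sub, Matrix.mul_one, mul_smul_comm, hLbE, smul_zero, sub_zero]
  have hPiK : Pi * K = K := by
    rw [hPidef, sub_mul, Matrix.one_mul, smul_mul_assoc, hEK, smul_zero, sub_zero]
  have hKPi : K * Pi = K := by
    rw [hPidef, mul_sub, Matrix.mul_one, mul_smul_comm, hKE, smul_zero, sub_zero]
  have hPit : Piᵀ = Pi := by
    rw [hPidef, Matrix.transpose_sub, Matrix.transpose_one, Matrix.transpose_smul, hEt]
  -- Lp * Lb = Pi
  have hP2 : Lp * Lb = Pi := by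
    have hz : Lb * (Pi - Lp * Lb) = 0 := by
      rw [mul_sub, hLbPi, ← Matrix.mul_assoc, hLp1, sub_self]
    have hLpLbE : (Lp * Lb) * E = 0 := by
      rw [Matrix.mul_assoc, hLbE, Matrix.mul_zero]
    have hELpLb : E * (Lp * Lb) = 0 := by
      calc E * (Lp * Lb) = Eᵀ * (Lp * Lb)ᵀ := by rw [hEt, hLp4]
      _ = ((Lp * Lb) * E)ᵀ := (Matrix.transpose_mul (Lp * Lb) E).symm
      _ = 0 := by rw [hLpLbE, Matrix.transpose_zero]
    have hz2 : E * (Pi - Lp * Lb) = 0 := by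
      rw [mul_sub, hEPi, hELpLb, sub_self]
    have := key _ hz hz2
    have := sub_eq_zero.mp this
    exact this.symm
  -- Lb * Lp = Pi
  have hP1 : Lb * Lp = Pi := by
    have hzr : (Pi - Lb * Lp) * Lb = 0 := by
      rw [sub_mul, hPiLb, hLp1, sub_self]
    have hsymD : (Pi - Lb * Lp)ᵀ = Pi - Lb * Lp := by
      rw [Matrix.transpose_sub, hPit, hLp3]
    have hz : Lb * (Pi - Lb * Lp) = 0 := by
      calc Lb * (Pi - Lb * Lp) = Lbᵀ * (Pi - Lb * Lp)ᵀ := by rw [hLbsym, hsymD]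
      _ = ((Pi - Lb * Lp) * Lb)ᵀ := (Matrix.transpose_mul _ _).symm
      _ = 0 := by rw [hzr, Matrix.transpose_zero]
    have hz2 : E * (Pi - Lb * Lp) = 0 := by
      rw [mul_sub, hEPi, ← Matrix.mul_assoc, hELb, Matrix.zero_mul, sub_self]
    have := key _ hz hz2
    have := sub_eq_zero.mp this
    exact this.symm
  have hPiLp : Pi * Lp = Lp := by rw [← hP2, hLp2]
  have hLpPi : Lp * Pi = Lp := by rw [← hP1, ← Matrix.mul_assoc, hLp2]
  -- rewrite J
  have hσ2 : (σ:ℝ) ^ 2 ≠ 0 := pow_ne_zero 2 hσ.ne'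
  have hJ2 : J = (σ ^ 2)⁻¹ • (Lb * G⁻¹ * Lb) := by
    rw [hJ, hQinv, mul_sub, sub_mul, mul_smul_comm, smul_mul_assoc,
      Matrix.mul_assoc Lb E Lb, hELb, Matrix.mul_zero, smul_zero, sub_zero]
  -- J * P = Pi
  have hJP : J * P = Pi := by
    rw [hJ2, hP, smul_mul_assoc, mul_smul_comm, smul_smul,
      inv_mul_cancel₀ hσ2, one_smul]
    calc Lb * G⁻¹ * Lb * (Lp * K * Lp)
        = Lb * G⁻¹ * ((Lb * Lp) * (K * Lp)) := by
          simp only [Matrix.mul_assoc]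
      _ = Lb * G⁻¹ * (K * Lp) := by rw [hP1, ← Matrix.mul_assoc Pi K Lp, hPiK]
      _ = Lb * ((G⁻¹ * K) * Lp) := by simp only [Matrix.mul_assoc]
      _ = Lb * (Pi * Lp) := by rw [hGiK]
      _ = Pi := by rw [hPiLp, hP1]
  -- P * J = Pi
  have hPJ : P * J = Pi := by
    rw [hJ2, hP, smul_mul_assoc, mul_smul_comm, smul_smul,
      mul_inv_cancel₀ hσ2, one_smul]
    calc Lp * K * Lp * (Lb * G⁻¹ * Lb)
        = Lp * ((K * (Lp * Lb)) * (G⁻¹ * Lb)) := by simp only [Matrix.mul_assoc]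
      _ = Lp * ((K * G⁻¹) * Lb) := by
          rw [hP2, hKPi, Matrix.mul_assoc K G⁻¹ Lb]
      _ = Lp * (Pi * Lb) := by rw [hKGi]
      _ = Pi := by rw [hPiLb, hP2]
  refine ⟨?_, ?_, ?_, ?_⟩
  · rw [hJP, hJ2, mul_smul_comm]
    simp only [Matrix.mul_assoc]
    rw [← Matrix.mul_assoc Pi Lb (G⁻¹ * Lb), hPiLb]
  · rw [hPJ, hP, mul_smul_comm]
    simp only [Matrix.mul_assoc]
    rw [← Matrix.mul_assoc Pi Lp (K * Lp), hPiLp]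
  · rw [hJP, hPit]
  · rw [hPJ, hPit]
end

section
/- Let M ≥ 1 and N ≥ 1. Let Ē be a real M×N matrix with Ēᵀ𝟙 = 0 and w̄ ∈ ℝ^N, and set L̄ := Ē diag(w̄) Ēᵀ; assume L̄ is symmetric with kernel exactly the span of 𝟙, and let L̄⁺ denote its Moore–Penrose pseudoinverse. Let L be a real symmetric positive semidefinite M×M matrix with L𝟙 = 0 and spectral decomposition L = V Λ Vᵀ with V orthogonal and Λ diagonal with nonnegative entries. Let (X, μ) be a probability space, σ > 0, and ν : X → ℝ^N measurable and square-integrable with E_μ[ν] = 0 and E_μ[ν νᵀ] = σ² I_N. Fix θ ∈ ℝ^M and c ∈ ℝ, set x := diag(w̄) Ēᵀ θ + ν and θ̂ := L̄⁺ Ē x + c𝟙. Then: (i) L (E_μ[θ̂] − θ) = 0 (graph unbiasedness); and (ii) E_μ[ Λ^{1/2} Vᵀ (θ̂ − θ)(θ̂ − θ)ᵀ V Λ^{1/2} ] = σ² Λ^{1/2} Vᵀ L̄⁺ Ē Ēᵀ L̄⁺ V Λ^{1/2}. -/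
open Matrix MeasureTheory

private lemma myIntMul {X : Type*} [MeasurableSpace X] {μ : Measure X} [IsFiniteMeasure μ]
    {f g : X → ℝ} (hf : MemLp f 2 μ) (hg : MemLp g 2 μ) :
    Integrable (fun x => f x * g x) μ := by
  have h1 := (hf.add hg).integrable_sq
  have h2 := hf.integrable_sq
  have h3 := hg.integrable_sq
  have h := ((h1.sub h2).sub h3).div_const 2
  refine h.congr (Filter.Eventually.of_forall fun x => ?_)
  simp only [Pi.sub_apply, Pi.add_apply]
  ring

private lemma mpSymm {M : ℕ} (A P : Matrix (Fin M) (Fin M) ℝ) (hA : Aᵀ = A)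
    (h1 : A*P*A = A) (h2 : P*A*P = P) (h3 : (A*P)ᵀ = A*P) (h4 : (P*A)ᵀ = P*A) :
    Pᵀ = P := by
  have q1 : A*Pᵀ*A = A := by
    have := congrArg Matrix.transpose h1
    simpa [Matrix.transpose_mul, hA, Matrix.mul_assoc] using this
  have e1 : A*Pᵀ = P*A := by rw [← hA, ← Matrix.transpose_mul, h4, hA]
  have e2 : Pᵀ*A = A*P := by rw [← hA, ← Matrix.transpose_mul, h3, hA]
  have sAQ : (A*Pᵀ)ᵀ = A*Pᵀ := by rw [e1, h4]
  have sQA : (Pᵀ*A)ᵀ = Pᵀ*A := by rw [e2, h3]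
  have c1 : A*P = A*Pᵀ := by
    calc A*P = (A*Pᵀ*A)*P := by rw [q1]
    _ = (A*Pᵀ)*(A*P) := by noncomm_ring
    _ = (A*Pᵀ)ᵀ*(A*P)ᵀ := by rw [sAQ, h3]
    _ = ((A*P)*(A*Pᵀ))ᵀ := (Matrix.transpose_mul _ _).symm
    _ = ((A*P*A)*Pᵀ)ᵀ := congrArg Matrix.transpose (by noncomm_ring)
    _ = (A*Pᵀ)ᵀ := by rw [h1]
    _ = A*Pᵀ := sAQ
  have c2 : P*A = Pᵀ*A := by
    calc P*A = P*(A*Pᵀ*A) := by rw [q1]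
    _ = (P*A)*(Pᵀ*A) := by noncomm_ring
    _ = (P*A)ᵀ*(Pᵀ*A)ᵀ := by rw [h4, sQA]
    _ = ((Pᵀ*A)*(P*A))ᵀ := (Matrix.transpose_mul _ _).symm
    _ = (Pᵀ*(A*P*A))ᵀ := congrArg Matrix.transpose (by noncomm_ring)
    _ = (Pᵀ*A)ᵀ := by rw [h1]
    _ = Pᵀ*A := sQA
  have q2 : Pᵀ*A*Pᵀ = Pᵀ := by
    have := congrArg Matrix.transpose h2
    simpa [Matrix.transpose_mul, hA, Matrix.mul_assoc] using this
  calc Pᵀ = Pᵀ*A*Pᵀ := q2.symm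
  _ = (P*A)*Pᵀ := by rw [← c2]
  _ = P*(A*Pᵀ) := by rw [Matrix.mul_assoc]
  _ = P*(A*P) := by rw [← c1]
  _ = P := by rw [← Matrix.mul_assoc, h2]

private lemma conjVMV {M : ℕ} (A : Matrix (Fin M) (Fin M) ℝ) (u : Fin M → ℝ) :
    A * Matrix.vecMulVec u u * Aᵀ = Matrix.vecMulVec (A *ᵥ u) (A *ᵥ u) := by
  ext i j
  simp only [Matrix.mul_apply, Matrix.vecMulVec_apply, Matrix.transpose_apply,
    Matrix.mulVec, dotProduct]
  rw [Finset.sum_mul_sum]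
  simp only [Finset.sum_mul]
  rw [Finset.sum_comm]
  exact Finset.sum_congr rfl fun k _ => Finset.sum_congr rfl fun l _ => by ring

/-- Efficiency of the estimator θ̂ = L̄†Ēx + c𝟙 in the linear Gaussian model
with relative measurements: it is graph-unbiased and its Laplacian-based
weighted MSE matrix attains the graph Cramér–Rao bound. -/
theorem stmt_11 (M N : ℕ) (hM : 1 ≤ M) (hN : 1 ≤ N)
    (E : Matrix (Fin M) (Fin N) ℝ)
    (hE1 : Eᵀ *ᵥ (fun _ => 1) = 0)
    (wbar : Fin N → ℝ)
    (Lb : Matrix (Fin M) (Fin M) ℝ)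
    (hLb : Lb = E * Matrix.diagonal wbar * Eᵀ)
    (hLbsym : Lb.IsSymm)
    (hLbker : ∀ x : Fin M → ℝ, Lb *ᵥ x = 0 → ∃ c : ℝ, x = fun _ => c)
    (Lp : Matrix (Fin M) (Fin M) ℝ)
    (hLp1 : Lb * Lp * Lb = Lb) (hLp2 : Lp * Lb * Lp = Lp)
    (hLp3 : (Lb * Lp)ᵀ = Lb * Lp) (hLp4 : (Lp * Lb)ᵀ = Lp * Lb)
    (V : Matrix (Fin M) (Fin M) ℝ) (hV : Vᵀ * V = 1)
    (d : Fin M → ℝ) (hd : ∀ i, 0 ≤ d i)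
    (L : Matrix (Fin M) (Fin M) ℝ)
    (hLdef : L = V * Matrix.diagonal d * Vᵀ)
    (hLpsd : L.PosSemidef) (hL1 : L *ᵥ (fun _ => 1) = 0)
    (X : Type*) [MeasurableSpace X] (μ : Measure X) [IsProbabilityMeasure μ]
    (σ : ℝ) (hσ : 0 < σ)
    (ν : X → Fin N → ℝ) (hνmeas : Measurable ν)
    (hν2 : ∀ i : Fin N, MemLp (fun x => ν x i) 2 μ)
    (hνmean : ∀ i : Fin N, ∫ x, ν x i ∂μ = 0)
    (hνcov : (Matrix.of fun i j => ∫ x, ν x i * ν x j ∂μ)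
      = σ ^ 2 • (1 : Matrix (Fin N) (Fin N) ℝ))
    (θ : Fin M → ℝ) (c : ℝ)
    (xs : X → Fin N → ℝ)
    (hxs : xs = fun ω => Matrix.diagonal wbar *ᵥ (Eᵀ *ᵥ θ) + ν ω)
    (est : X → Fin M → ℝ)
    (hest : est = fun ω => Lp *ᵥ (E *ᵥ xs ω) + c • ((fun _ => 1) : Fin M → ℝ)) :
    L *ᵥ ((fun i => ∫ ω, est ω i ∂μ) - θ) = 0 ∧
    (Matrix.of fun i j => ∫ ω,
        (Matrix.diagonal (fun i => Real.sqrt (d i)) * Vᵀ *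
          Matrix.vecMulVec (est ω - θ) (est ω - θ) * V *
          Matrix.diagonal (fun i => Real.sqrt (d i))) i j ∂μ)
      = σ ^ 2 • (Matrix.diagonal (fun i => Real.sqrt (d i)) * Vᵀ *
          Lp * E * Eᵀ * Lp * V *
          Matrix.diagonal (fun i => Real.sqrt (d i))) := by
  have hPsym : Lpᵀ = Lp := mpSymm Lb Lp hLbsym hLp1 hLp2 hLp3 hLp4
  -- the constant shift
  have hker0 : Lb *ᵥ (Lp *ᵥ (Lb *ᵥ θ) - θ) = 0 := by
    rw [Matrix.mulVec_sub, Matrix.mulVec_mulVec, Matrix.mulVec_mulVec, hLp1, sub_self]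
  obtain ⟨c', hc'⟩ := hLbker _ hker0
  set a : ℝ := c' + c with ha
  have key : ∀ ω, est ω - θ = (fun _ => a) + (Lp * E) *ᵥ ν ω := by
    intro ω
    have hx : est ω - θ = (Lp *ᵥ (Lb *ᵥ θ) - θ) + c • (fun _ => (1:ℝ)) + (Lp * E) *ᵥ ν ω := by
      rw [hest, hxs]
      simp only
      rw [Matrix.mulVec_add, Matrix.mulVec_mulVec, Matrix.mulVec_mulVec, ← hLb,
        Matrix.mulVec_add, ← Matrix.mulVec_mulVec (ν ω) Lp E]
      abel
    rw [hx, hc']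
    funext i
    simp only [Pi.add_apply, Pi.smul_apply, smul_eq_mul, mul_one, ha]
  have hνint : ∀ j, Integrable (fun ω => ν ω j) μ := fun j => (hν2 j).integrable one_le_two
  have hmean : ∀ i, ∫ ω, est ω i ∂μ = θ i + a := by
    intro i
    have hpt : ∀ ω, est ω i = (θ i + a) + ∑ j, (Lp * E) i j * ν ω j := by
      intro ω
      have h := congrFun (key ω) i
      simp only [Pi.sub_apply, Pi.add_apply, Matrix.mulVec, dotProduct] at h
      linarith [h]
    simp_rw [hpt]
    rw [integral_add (integrable_const _)
      (integrable_finset_sum _ fun j _ => (hνint j).const_mul _),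
      integral_finset_sum _ fun j _ => (hνint j).const_mul _]
    simp [hνmean, integral_const_mul]
  constructor
  · have h1 : ((fun i => ∫ ω, est ω i ∂μ) - θ) = a • (fun _ => (1:ℝ)) := by
      funext i
      simp [hmean i]
    rw [h1, Matrix.mulVec_smul, hL1, smul_zero]
  · set Dh : Matrix (Fin M) (Fin M) ℝ := Matrix.diagonal (fun i => Real.sqrt (d i)) with hDh
    set A : Matrix (Fin M) (Fin M) ℝ := Dh * Vᵀ with hAdef
    have hA1 : A *ᵥ (fun _ => (1:ℝ)) = 0 := by
      have h0 : (Matrix.diagonal d * Vᵀ) *ᵥ (fun _ => (1:ℝ)) = 0 := by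
        have h := congrArg (fun v => Vᵀ *ᵥ v) hL1
        simp only [Matrix.mulVec_zero] at h
        rw [hLdef, Matrix.mulVec_mulVec, ← Matrix.mul_assoc, ← Matrix.mul_assoc, hV,
          Matrix.one_mul] at h
        exact h
      funext i
      have h := congrFun h0 i
      rw [← Matrix.mulVec_mulVec] at h
      rw [hAdef, ← Matrix.mulVec_mulVec]
      rw [Matrix.mulVec_diagonal] at h
      rw [Matrix.mulVec_diagonal]
      simp only [Pi.zero_apply] at h ⊢
      rcases mul_eq_zero.mp h with h | h
      · simp [h, Real.sqrt_eq_zero']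
      · simp [h]
    set C : Matrix (Fin M) (Fin N) ℝ := A * (Lp * E) with hCdef
    have hkey2 : ∀ ω, A *ᵥ (est ω - θ) = C *ᵥ ν ω := by
      intro ω
      have hone : ((fun _ => a) : Fin M → ℝ) = a • (fun _ => (1:ℝ)) := by
        funext i; simp
      rw [key ω, Matrix.mulVec_add, hone, Matrix.mulVec_smul, hA1, smul_zero, zero_add,
        Matrix.mulVec_mulVec, hCdef]
    have hAt : Aᵀ = V * Dh := by
      rw [hAdef, Matrix.transpose_mul, Matrix.transpose_transpose, hDh,
        Matrix.diagonal_transpose]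
    have hmat : ∀ ω, Dh * Vᵀ * Matrix.vecMulVec (est ω - θ) (est ω - θ) * V * Dh
        = Matrix.vecMulVec (C *ᵥ ν ω) (C *ᵥ ν ω) := by
      intro ω
      have : Dh * Vᵀ * Matrix.vecMulVec (est ω - θ) (est ω - θ) * V * Dh
          = A * Matrix.vecMulVec (est ω - θ) (est ω - θ) * Aᵀ := by
        rw [hAt, hAdef, Matrix.mul_assoc (Dh * Vᵀ * Matrix.vecMulVec (est ω - θ) (est ω - θ))]
      rw [this, conjVMV, hkey2]
    have hcov : ∀ k l, (∫ ω, ν ω k * ν ω l ∂μ) = σ ^ 2 * (if k = l then 1 else 0) := by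
      intro k l
      have h := congrFun (congrFun hνcov k) l
      simpa [Matrix.one_apply] using h
    have hM' : Dh * Vᵀ * Lp * E * Eᵀ * Lp * V * Dh = C * Cᵀ := by
      have hCt : Cᵀ = Eᵀ * Lp * (V * Dh) := by
        rw [hCdef, Matrix.transpose_mul, Matrix.transpose_mul, hPsym, hAt, Matrix.mul_assoc]
      rw [hCt, hCdef, hAdef]
      simp only [Matrix.mul_assoc]
    ext i j
    rw [Matrix.of_apply]
    have step1 : (∫ ω, (Dh * Vᵀ * Matrix.vecMulVec (est ω - θ) (est ω - θ) * V * Dh) i j ∂μ)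
        = ∫ ω, ∑ k, ∑ l, (C i k * C j l) * (ν ω k * ν ω l) ∂μ := by
      refine integral_congr_ae (Filter.Eventually.of_forall fun ω => ?_)
      show (Dh * Vᵀ * Matrix.vecMulVec (est ω - θ) (est ω - θ) * V * Dh) i j
        = ∑ k, ∑ l, (C i k * C j l) * (ν ω k * ν ω l)
      rw [hmat ω, Matrix.vecMulVec_apply]
      simp only [Matrix.mulVec, dotProduct]
      rw [Finset.sum_mul_sum]
      exact Finset.sum_congr rfl fun k _ => Finset.sum_congr rfl fun l _ => by ring
    rw [step1,
      integral_finset_sum _ (fun k _ => integrable_finset_sum _ fun l _ =>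
        (myIntMul (hν2 k) (hν2 l)).const_mul _)]
    have step2 : ∀ k, (∫ ω, ∑ l, (C i k * C j l) * (ν ω k * ν ω l) ∂μ)
        = σ ^ 2 * (C i k * C j k) := by
      intro k
      rw [integral_finset_sum _ (fun l _ => (myIntMul (hν2 k) (hν2 l)).const_mul _)]
      have : ∀ l, (∫ ω, (C i k * C j l) * (ν ω k * ν ω l) ∂μ)
          = (C i k * C j l) * (σ ^ 2 * (if k = l then 1 else 0)) := by
        intro l
        rw [integral_const_mul, hcov]
      simp_rw [this]
      simp [mul_ite, Finset.sum_ite_eq]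
      ring
    simp_rw [step2]
    rw [hM']
    simp only [Matrix.smul_apply, Matrix.mul_apply, Matrix.transpose_apply, smul_eq_mul,
      Finset.mul_sum]
end

section
/- Let Ē be a real M×N matrix with linearly independent columns (rank N), w ∈ ℝ^N, and let P be the Moore–Penrose pseudoinverse of Ē Ēᵀ. Then (Ē diag(w) Ēᵀ) P (Ē diag(w) Ēᵀ) = Ē diag(w)² Ēᵀ, where diag(w)² is the diagonal matrix with entries w_i². -/
open Matrix

lemma aux_isUnit_transpose_mul_self {M N : ℕ} (E : Matrix (Fin M) (Fin N) ℝ)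
    (hE : E.rank = N) : IsUnit (Eᵀ * E) := by
  rw [← Matrix.mulVec_surjective_iff_isUnit]
  have hrank : (Eᵀ * E).rank = N := by rw [Matrix.rank_transpose_mul_self, hE]
  have htop : LinearMap.range (Eᵀ * E).mulVecLin = ⊤ := by
    apply Submodule.eq_top_of_finrank_eq
    rw [← Matrix.rank]
    simpa using hrank
  intro y
  have : y ∈ LinearMap.range (Eᵀ * E).mulVecLin := htop ▸ Submodule.mem_top
  obtain ⟨x, hx⟩ := this
  exact ⟨x, hx⟩

/-- For Ē with linearly independent columns and P the Moore–Penrose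
pseudoinverse of ĒĒᵀ: (Ē diag(w) Ēᵀ) P (Ē diag(w) Ēᵀ) = Ē diag(w)² Ēᵀ. -/
theorem stmt_13 (M N : ℕ)
    (E : Matrix (Fin M) (Fin N) ℝ) (hE : E.rank = N) (w : Fin N → ℝ)
    (P : Matrix (Fin M) (Fin M) ℝ)
    (hP1 : (E * Eᵀ) * P * (E * Eᵀ) = E * Eᵀ)
    (hP2 : P * (E * Eᵀ) * P = P)
    (hP3 : ((E * Eᵀ) * P)ᵀ = (E * Eᵀ) * P)
    (hP4 : (P * (E * Eᵀ))ᵀ = P * (E * Eᵀ)) :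
    (E * Matrix.diagonal w * Eᵀ) * P * (E * Matrix.diagonal w * Eᵀ)
      = E * Matrix.diagonal (fun i => w i ^ 2) * Eᵀ := by
  have hG : IsUnit (Eᵀ * E) := aux_isUnit_transpose_mul_self E hE
  have key : Eᵀ * P * E = 1 := by
    have h1 : Eᵀ * ((E * Eᵀ) * P * (E * Eᵀ)) * E = Eᵀ * (E * Eᵀ) * E := by
      rw [hP1]
    have h2 : (Eᵀ * E) * (Eᵀ * P * E) * (Eᵀ * E) = (Eᵀ * E) * 1 * (Eᵀ * E) := by
      simpa only [Matrix.mul_assoc, Matrix.mul_one] using h1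
    have h3 : (Eᵀ * E) * ((Eᵀ * P * E) * (Eᵀ * E)) = (Eᵀ * E) * (1 * (Eᵀ * E)) := by
      simpa only [Matrix.mul_assoc] using h2
    have h4 := hG.mul_left_cancel h3
    exact hG.mul_right_cancel h4
  calc (E * Matrix.diagonal w * Eᵀ) * P * (E * Matrix.diagonal w * Eᵀ)
      = E * Matrix.diagonal w * (Eᵀ * P * E) * (Matrix.diagonal w * Eᵀ) := by
        simp only [Matrix.mul_assoc]
    _ = E * (Matrix.diagonal w * Matrix.diagonal w) * Eᵀ := by
        rw [key]; simp only [Matrix.mul_one, Matrix.mul_assoc]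
    _ = E * Matrix.diagonal (fun i => w i ^ 2) * Eᵀ := by
        rw [Matrix.diagonal_mul_diagonal]
        congr 1; congr 1; ext i; ring
end

section
/- Let M, D, R ≥ 1 with R ≤ M. Let V be a real M×M orthogonal matrix, Q̄ the M×R matrix whose top R×R block is the identity and remaining rows zero, N a real D×M matrix, and Σ a real symmetric M×M matrix such that S := N Σ Nᵀ is invertible and A := Q̄ᵀ Vᵀ Nᵀ S^{-1} N V Q̄ is invertible. Let (X, μ) be a probability space and w : X → ℝ^M measurable and square-integrable with E_μ[w] = 0 and E_μ[w wᵀ] = Σ. Fix t ∈ ℝ^R, set θ := V Q̄ t, x := N(θ + w), and define the estimator θ̂ := V Q̄ A^{-1} Q̄ᵀ Vᵀ Nᵀ S^{-1} x. Then: (i) E_μ[θ̂] = θ; and (ii) for every M×M diagonal matrix Λ with nonnegative entries, E_μ[ Λ^{1/2} Vᵀ (θ̂ − θ)(θ̂ − θ)ᵀ V Λ^{1/2} ] = Λ^{1/2} Q̄ A^{-1} Q̄ᵀ Λ^{1/2}. -/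
open Matrix MeasureTheory

/-- Efficiency of the constrained-ML estimator for bandlimited graph signal
recovery: it is unbiased and its Laplacian-based weighted MSE matrix attains
the graph Cramér–Rao bound Λ^{1/2} Q̄ A⁻¹ Q̄ᵀ Λ^{1/2}. -/
theorem stmt_15 (M D R : ℕ) (hM : 1 ≤ M) (hD : 1 ≤ D) (hR : 1 ≤ R)
    (hRM : R ≤ M)
    (V : Matrix (Fin M) (Fin M) ℝ) (hV : Vᵀ * V = 1)
    (Q : Matrix (Fin M) (Fin R) ℝ)
    (hQ : Q = Matrix.of fun (i : Fin M) (j : Fin R) =>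
      if (i : ℕ) = (j : ℕ) then (1 : ℝ) else 0)
    (N : Matrix (Fin D) (Fin M) ℝ)
    (Cov : Matrix (Fin M) (Fin M) ℝ) (hCov : Cov.IsSymm)
    (S : Matrix (Fin D) (Fin D) ℝ) (hS : S = N * Cov * Nᵀ)
    (hSinv : IsUnit S)
    (A : Matrix (Fin R) (Fin R) ℝ)
    (hA : A = Qᵀ * Vᵀ * Nᵀ * S⁻¹ * N * V * Q) (hAinv : IsUnit A)
    (X : Type*) [MeasurableSpace X] (μ : Measure X) [IsProbabilityMeasure μ]
    (w : X → Fin M → ℝ) (hwmeas : Measurable w)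
    (hw2 : ∀ i : Fin M, MemLp (fun x => w x i) 2 μ)
    (hwmean : ∀ i : Fin M, ∫ x, w x i ∂μ = 0)
    (hwcov : (Matrix.of fun i j => ∫ x, w x i * w x j ∂μ) = Cov)
    (t : Fin R → ℝ) (θ : Fin M → ℝ) (hθ : θ = (V * Q) *ᵥ t)
    (xs : X → Fin D → ℝ) (hxs : xs = fun ω => N *ᵥ (θ + w ω))
    (est : X → Fin M → ℝ)
    (hest : est = fun ω => (V * Q * A⁻¹ * Qᵀ * Vᵀ * Nᵀ * S⁻¹) *ᵥ xs ω) :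
    (fun i => ∫ ω, est ω i ∂μ) = θ ∧
    ∀ d : Fin M → ℝ, (∀ i, 0 ≤ d i) →
      (Matrix.of fun i j => ∫ ω,
          (Matrix.diagonal (fun i => Real.sqrt (d i)) * Vᵀ *
            Matrix.vecMulVec (est ω - θ) (est ω - θ) * V *
            Matrix.diagonal (fun i => Real.sqrt (d i))) i j ∂μ)
        = Matrix.diagonal (fun i => Real.sqrt (d i)) * Q * A⁻¹ * Qᵀ *
            Matrix.diagonal (fun i => Real.sqrt (d i)) := by
  have hAdet : IsUnit A.det := (Matrix.isUnit_iff_isUnit_det A).mp hAinv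
  have hSdet : IsUnit S.det := (Matrix.isUnit_iff_isUnit_det S).mp hSinv
  have hCovT : Covᵀ = Cov := hCov
  have hSt : Sᵀ = S := by
    rw [hS]; simp only [Matrix.transpose_mul, Matrix.transpose_transpose, hCovT,
      Matrix.mul_assoc]
  have hSit : (S⁻¹)ᵀ = S⁻¹ := by rw [Matrix.transpose_nonsing_inv, hSt]
  have hAt : Aᵀ = A := by
    rw [hA]; simp only [Matrix.transpose_mul, Matrix.transpose_transpose, hSit]
    simp only [Matrix.mul_assoc]
  have hAit : (A⁻¹)ᵀ = A⁻¹ := by rw [Matrix.transpose_nonsing_inv, hAt]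
  set C : Matrix (Fin M) (Fin M) ℝ := V * Q * A⁻¹ * Qᵀ * Vᵀ * Nᵀ * S⁻¹ * N with hC
  have hCt : Cᵀ = Nᵀ * S⁻¹ * N * V * Q * A⁻¹ * Qᵀ * Vᵀ := by
    rw [hC]; simp only [Matrix.transpose_mul, Matrix.transpose_transpose, hSit, hAit]
    simp only [Matrix.mul_assoc]
  have fact1 : C * (V * Q) = V * Q := by
    have h1 : C * (V * Q) = V * Q * A⁻¹ * (Qᵀ * Vᵀ * Nᵀ * S⁻¹ * N * V * Q) := by
      rw [hC]; simp only [Matrix.mul_assoc]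
    rw [h1, ← hA, Matrix.mul_assoc (V * Q), Matrix.nonsing_inv_mul A hAdet, Matrix.mul_one]
  have fact2 : C * Cov * Cᵀ = V * Q * A⁻¹ * Qᵀ * Vᵀ := by
    have h1 : C * Cov * Cᵀ =
        V * Q * A⁻¹ * (Qᵀ * Vᵀ * Nᵀ * (S⁻¹ * (N * Cov * Nᵀ) * S⁻¹) * N * V * Q) *
          A⁻¹ * (Qᵀ * Vᵀ) := by
      rw [hC, hCt]; simp only [Matrix.mul_assoc]
    rw [h1, ← hS, Matrix.nonsing_inv_mul S hSdet, Matrix.one_mul, ← hA]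
    have h2 : V * Q * A⁻¹ * A * A⁻¹ * (Qᵀ * Vᵀ) =
        V * Q * (A⁻¹ * A) * A⁻¹ * (Qᵀ * Vᵀ) := by simp only [Matrix.mul_assoc]
    rw [h2, Matrix.nonsing_inv_mul A hAdet, Matrix.mul_one]
    simp only [Matrix.mul_assoc]
  have int_w : ∀ i, Integrable (fun ω => w ω i) μ :=
    fun i => (hw2 i).integrable one_le_two
  have int_ww : ∀ k l, Integrable (fun ω => w ω k * w ω l) μ := by
    intro k l
    have h1 : Integrable (fun ω => (w ω k + w ω l) ^ 2) μ := by
      have := ((hw2 k).add (hw2 l)).integrable_sq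
      simpa using this
    have h2 := (hw2 k).integrable_sq
    have h3 := (hw2 l).integrable_sq
    have h4 := ((h1.sub h2).sub h3).const_mul (1 / 2 : ℝ)
    have heq : (fun ω => w ω k * w ω l) =
        fun ω => (1 / 2 : ℝ) * ((w ω k + w ω l) ^ 2 - w ω k ^ 2 - w ω l ^ 2) := by
      funext ω; ring
    rw [heq]; exact h4
  have hestω : ∀ ω, est ω = θ + C *ᵥ w ω := by
    intro ω
    rw [hest, hxs]
    simp only [Matrix.mulVec_mulVec]
    rw [show V * Q * A⁻¹ * Qᵀ * Vᵀ * Nᵀ * S⁻¹ * N = C from rfl, Matrix.mulVec_add]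
    congr 1
    rw [hθ, Matrix.mulVec_mulVec, fact1]
  have he : ∀ ω, est ω - θ = C *ᵥ w ω := by
    intro ω; rw [hestω ω]; abel
  constructor
  · funext i
    have hfun : (fun ω => est ω i) = fun ω => θ i + ∑ k, C i k * w ω k := by
      funext ω
      rw [hestω ω]
      simp [Matrix.mulVec, dotProduct]
    rw [hfun, integral_add (integrable_const _)
        (integrable_finset_sum _ fun k _ => (int_w k).const_mul _),
      integral_const, integral_finset_sum _ fun k _ => (int_w k).const_mul _]
    simp [integral_const_mul, hwmean]
  · intro d _
    set D₁ : Matrix (Fin M) (Fin M) ℝ :=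
      Matrix.diagonal (fun i => Real.sqrt (d i)) with hD₁
    set F : Matrix (Fin M) (Fin M) ℝ := D₁ * Vᵀ * C with hF
    set G : Matrix (Fin M) (Fin M) ℝ := Cᵀ * V * D₁ with hG
    have hvec : ∀ ω, Matrix.vecMulVec (est ω - θ) (est ω - θ) =
        C * Matrix.vecMulVec (w ω) (w ω) * Cᵀ := by
      intro ω
      ext a b
      simp only [he ω, Matrix.vecMulVec_apply, Matrix.mulVec, dotProduct,
        Matrix.mul_apply, Matrix.transpose_apply]
      rw [Finset.sum_mul_sum]
      rw [Finset.sum_comm]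
      refine Finset.sum_congr rfl fun l _ => ?_
      rw [Finset.sum_mul]
      refine Finset.sum_congr rfl fun k _ => ?_
      ring
    have hentry : ∀ ω i j,
        (D₁ * Vᵀ * Matrix.vecMulVec (est ω - θ) (est ω - θ) * V * D₁) i j =
        ∑ l, ∑ k, F i k * G l j * (w ω k * w ω l) := by
      intro ω i j
      have hP : D₁ * Vᵀ * Matrix.vecMulVec (est ω - θ) (est ω - θ) * V * D₁ =
          F * Matrix.vecMulVec (w ω) (w ω) * G := by
        rw [hvec ω, hF, hG]; simp only [Matrix.mul_assoc]
      rw [hP]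
      simp only [Matrix.mul_apply, Matrix.vecMulVec_apply, Finset.sum_mul, Finset.mul_sum]
      refine Finset.sum_congr rfl fun l _ => Finset.sum_congr rfl fun k _ => ?_
      ring
    ext i j
    simp only [Matrix.of_apply]
    calc (∫ ω, (D₁ * Vᵀ * Matrix.vecMulVec (est ω - θ) (est ω - θ) * V * D₁) i j ∂μ)
        = ∫ ω, ∑ l, ∑ k, F i k * G l j * (w ω k * w ω l) ∂μ := by
          refine integral_congr_ae (Filter.Eventually.of_forall fun ω => ?_)
          exact hentry ω i j
      _ = ∑ l, ∑ k, F i k * G l j * Cov k l := by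
          rw [integral_finset_sum _ fun l _ => integrable_finset_sum _ fun k _ =>
            ((int_ww k l).const_mul _)]
          refine Finset.sum_congr rfl fun l _ => ?_
          rw [integral_finset_sum _ fun k _ => ((int_ww k l).const_mul _)]
          refine Finset.sum_congr rfl fun k _ => ?_
          rw [integral_const_mul, ← hwcov]
          rfl
      _ = (F * Cov * G) i j := by
          simp only [Matrix.mul_apply, Finset.sum_mul, Finset.mul_sum]
          refine Finset.sum_congr rfl fun l _ => Finset.sum_congr rfl fun k _ => ?_
          ring
      _ = (D₁ * Q * A⁻¹ * Qᵀ * D₁) i j := by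
          congr 1
          have h1 : F * Cov * G = D₁ * Vᵀ * (C * Cov * Cᵀ) * V * D₁ := by
            rw [hF, hG]; simp only [Matrix.mul_assoc]
          rw [h1, fact2]
          have h2 : D₁ * Vᵀ * (V * Q * A⁻¹ * Qᵀ * Vᵀ) * V * D₁ =
              D₁ * (Vᵀ * V) * Q * A⁻¹ * Qᵀ * (Vᵀ * V) * D₁ := by simp only [Matrix.mul_assoc]
          rw [h2, hV, Matrix.mul_one, Matrix.mul_one]
end
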